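/- arXiv:1909.02682 — 3 statements merged into one kernel-verified Lean document; each statement's English description precedes it below -/
import Mathlib

section
/- Let (η_k) satisfy 0 ≤ η_k ≤ 1 and ∑_k η_k = ∞, and let (u_k) be a sequence in a normed space with ‖u_k‖ ≤ G for all k. Define δ_{k+1} = (1 - η_k) δ_k - η_k λ u_k with λ ≥ 0 and arbitrary initial δ_0. Then limsup_{k→∞} ‖δ_k‖ ≤ λ G. -/
/-!
Writing `a k = ‖δ k‖` and `c = λ G`, the triangle inequality gives
`a (k+1) - c ≤ (1 - η k) (a k - c)`. Hence the excess `b k = max (a k - c) 0` contracts by the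
factors `1 - η k ≤ exp (-η k)`, so `b n ≤ b 0 · exp (-∑_{k<n} η k) → 0` because `∑ η k = ∞`.
-/

open Filter Finset Topology

lemma le_mul_exp_neg_sum_of_le_one_sub_mul {η b : ℕ → ℝ} (hb : ∀ k, 0 ≤ b k)
    (hstep : ∀ k, b (k + 1) ≤ (1 - η k) * b k) (n : ℕ) :
    b n ≤ b 0 * Real.exp (-∑ k ∈ range n, η k) := by
  induction n with
  | zero => simp
  | succ n ih =>
    have hexp : 1 - η n ≤ Real.exp (-η n) := by linarith [Real.add_one_le_exp (-η n)]
    calc b (n + 1) ≤ (1 - η n) * b n := hstep n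
      _ ≤ Real.exp (-η n) * b n := mul_le_mul_of_nonneg_right hexp (hb n)
      _ ≤ Real.exp (-η n) * (b 0 * Real.exp (-∑ k ∈ range n, η k)) :=
          mul_le_mul_of_nonneg_left ih (Real.exp_pos _).le
      _ = b 0 * Real.exp (-∑ k ∈ range (n + 1), η k) := by
          rw [sum_range_succ, neg_add, Real.exp_add]; ring

lemma tendsto_zero_of_le_one_sub_mul {η b : ℕ → ℝ} (hb : ∀ k, 0 ≤ b k)
    (hstep : ∀ k, b (k + 1) ≤ (1 - η k) * b k)
    (hdiv : Tendsto (fun n => ∑ k ∈ range n, η k) atTop atTop) :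
    Tendsto b atTop (𝓝 0) := by
  have hexp : Tendsto (fun n => b 0 * Real.exp (-∑ k ∈ range n, η k)) atTop (𝓝 0) := by
    simpa using (Real.tendsto_exp_atBot.comp (tendsto_neg_atTop_atBot.comp hdiv)).const_mul (b 0)
  exact tendsto_of_tendsto_of_tendsto_of_le_of_le tendsto_const_nhds hexp hb
    (le_mul_exp_neg_sum_of_le_one_sub_mul hb hstep)

lemma limsup_le_of_sub_le_one_sub_mul {η a : ℕ → ℝ} {c : ℝ} (ha : ∀ k, 0 ≤ a k)
    (hη : ∀ k, η k ≤ 1) (hdiv : Tendsto (fun n => ∑ k ∈ range n, η k) atTop atTop)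
    (hstep : ∀ k, a (k + 1) - c ≤ (1 - η k) * (a k - c)) :
    limsup a atTop ≤ c := by
  set b : ℕ → ℝ := fun k => max (a k - c) 0
  have hb : ∀ k, 0 ≤ b k := fun k => le_max_right _ _
  have hb_step : ∀ k, b (k + 1) ≤ (1 - η k) * b k := fun k =>
    max_le ((hstep k).trans (mul_le_mul_of_nonneg_left (le_max_left _ _) (by linarith [hη k])))
      (mul_nonneg (by linarith [hη k]) (hb k))
  have hlim : Tendsto (fun k => c + b k) atTop (𝓝 c) := by
    simpa using tendsto_const_nhds.add (tendsto_zero_of_le_one_sub_mul hb hb_step hdiv)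
  calc limsup a atTop
      ≤ limsup (fun k => c + b k) atTop :=
        limsup_le_limsup (.of_forall fun k => by linarith [le_max_left (a k - c) 0])
          (isCoboundedUnder_le_of_le _ ha) hlim.isBoundedUnder_le
    _ = c := hlim.limsup_eq

lemma norm_one_sub_smul_sub_smul_le {E : Type*} [NormedAddCommGroup E] [NormedSpace ℝ E]
    {t lam : ℝ} (ht₀ : 0 ≤ t) (ht₁ : t ≤ 1) (hlam : 0 ≤ lam) (x v : E) :
    ‖(1 - t) • x - (t * lam) • v‖ ≤ (1 - t) * ‖x‖ + t * lam * ‖v‖ := by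
  calc ‖(1 - t) • x - (t * lam) • v‖ ≤ ‖(1 - t) • x‖ + ‖(t * lam) • v‖ := norm_sub_le _ _
    _ = (1 - t) * ‖x‖ + t * lam * ‖v‖ := by
        rw [norm_smul, norm_smul, Real.norm_of_nonneg (by linarith),
          Real.norm_of_nonneg (mul_nonneg ht₀ hlam)]

theorem stmt_3 {E : Type*} [NormedAddCommGroup E] [NormedSpace ℝ E]
    (η : ℕ → ℝ) (hη : ∀ k, 0 ≤ η k ∧ η k ≤ 1)
    (hdiv : Filter.Tendsto (fun n => ∑ k ∈ Finset.range n, η k) Filter.atTop Filter.atTop)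
    (u : ℕ → E) (G : ℝ) (hu : ∀ k, ‖u k‖ ≤ G)
    (lam : ℝ) (hlam : 0 ≤ lam) (δ : ℕ → E)
    (hrec : ∀ k, δ (k + 1) = (1 - η k) • δ k - (η k * lam) • u k) :
    Filter.limsup (fun k => ‖δ k‖) Filter.atTop ≤ lam * G := by
  refine limsup_le_of_sub_le_one_sub_mul (fun k => norm_nonneg _) (fun k => (hη k).2) hdiv
    fun k => ?_
  have hnorm := norm_one_sub_smul_sub_smul_le (hη k).1 (hη k).2 hlam (δ k) (u k)
  have hG := mul_le_mul_of_nonneg_left (hu k) (mul_nonneg (hη k).1 hlam)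
  rw [hrec k]
  linarith
end

section
/- Let T be a γ-contraction on ℝ^n with 0 ≤ γ < 1 (in the sup norm), with fixed point q*. Let (η_k) satisfy 0 ≤ η_k ≤ 1 and ∑_k η_k = ∞. Define q_{k+1} = q_k + η_k (T q_k - q_k). Then q_k → q* as k → ∞. -/
/-!
Since `q* = T q*`, the error after one step is the convex combination
`(1 - η_k) (q_k - q*) + η_k (T q_k - T q*)`, whose norm is at most `(1 - η_k (1 - γ))` times the
previous error. Bounding `1 - x ≤ exp (-x)` and multiplying out, the error after `m` steps is at
most `exp (-(1 - γ) ∑_{k < m} η_k)` times the initial one, which tends to `0` as the sum diverges.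
-/

open Filter Topology Finset

lemma le_exp_neg_sum_mul_of_le_one_sub_mul {a c : ℕ → ℝ} (ha : ∀ k, 0 ≤ a k)
    (hstep : ∀ k, a (k + 1) ≤ (1 - c k) * a k) (m : ℕ) :
    a m ≤ Real.exp (-∑ k ∈ range m, c k) * a 0 := by
  induction m with
  | zero => simp
  | succ m ih =>
    calc a (m + 1) ≤ (1 - c m) * a m := hstep m
      _ ≤ Real.exp (-c m) * a m := by
          gcongr
          · exact ha m
          · linarith [Real.add_one_le_exp (-c m)]
      _ ≤ Real.exp (-c m) * (Real.exp (-∑ k ∈ range m, c k) * a 0) := by gcongr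
      _ = Real.exp (-∑ k ∈ range (m + 1), c k) * a 0 := by
          rw [← mul_assoc, ← Real.exp_add, sum_range_succ, neg_add, add_comm]

lemma tendsto_zero_of_le_one_sub_mul_s7 {a c : ℕ → ℝ} (ha : ∀ k, 0 ≤ a k)
    (hstep : ∀ k, a (k + 1) ≤ (1 - c k) * a k)
    (hdiv : Tendsto (fun m => ∑ k ∈ range m, c k) atTop atTop) :
    Tendsto a atTop (𝓝 0) := by
  have hexp : Tendsto (fun m => Real.exp (-∑ k ∈ range m, c k) * a 0) atTop (𝓝 0) := by
    simpa using (Real.tendsto_exp_atBot.comp (tendsto_neg_atTop_atBot.comp hdiv)).mul_const (a 0)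
  exact squeeze_zero ha (le_exp_neg_sum_mul_of_le_one_sub_mul ha hstep) hexp

lemma norm_add_smul_sub_sub_fixedPoint_le {E : Type*} [SeminormedAddCommGroup E]
    [NormedSpace ℝ E] {T : E → E} {γ η : ℝ} {x xstar : E} (hfix : T xstar = xstar)
    (hT : ‖T x - T xstar‖ ≤ γ * ‖x - xstar‖) (hη0 : 0 ≤ η) (hη1 : η ≤ 1) :
    ‖x + η • (T x - x) - xstar‖ ≤ (1 - η * (1 - γ)) * ‖x - xstar‖ := by
  have hsplit : x + η • (T x - x) - xstar = (1 - η) • (x - xstar) + η • (T x - T xstar) := by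
    rw [hfix]; module
  calc ‖x + η • (T x - x) - xstar‖
      ≤ ‖(1 - η) • (x - xstar)‖ + ‖η • (T x - T xstar)‖ := hsplit ▸ norm_add_le _ _
    _ = (1 - η) * ‖x - xstar‖ + η * ‖T x - T xstar‖ := by
        rw [norm_smul, norm_smul, Real.norm_of_nonneg (by linarith), Real.norm_of_nonneg hη0]
    _ ≤ (1 - η) * ‖x - xstar‖ + η * (γ * ‖x - xstar‖) := by gcongr
    _ = (1 - η * (1 - γ)) * ‖x - xstar‖ := by ring

theorem stmt_7_general (n : ℕ) (γ : ℝ) (hγ1 : γ < 1)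
    (T : (Fin n → ℝ) → (Fin n → ℝ))
    (hcontr : ∀ q₁ q₂, ‖T q₁ - T q₂‖ ≤ γ * ‖q₁ - q₂‖)
    (qstar : Fin n → ℝ) (hfix : T qstar = qstar)
    (η : ℕ → ℝ) (hη : ∀ k, 0 ≤ η k ∧ η k ≤ 1)
    (hdiv : Filter.Tendsto (fun m => ∑ k ∈ Finset.range m, η k) Filter.atTop Filter.atTop)
    (q : ℕ → Fin n → ℝ)
    (hrec : ∀ k, q (k + 1) = q k + η k • (T (q k) - q k)) :
    Filter.Tendsto q Filter.atTop (nhds qstar) := by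
  have hstep : ∀ k, ‖q (k + 1) - qstar‖ ≤ (1 - η k * (1 - γ)) * ‖q k - qstar‖ := fun k =>
    hrec k ▸ norm_add_smul_sub_sub_fixedPoint_le hfix (hcontr _ _) (hη k).1 (hη k).2
  have hdiv' : Tendsto (fun m => ∑ k ∈ range m, η k * (1 - γ)) atTop atTop := by
    simpa only [← sum_mul] using hdiv.atTop_mul_const (sub_pos.mpr hγ1)
  rw [tendsto_iff_norm_sub_tendsto_zero]
  exact tendsto_zero_of_le_one_sub_mul_s7 (fun k => norm_nonneg _) hstep hdiv'

theorem stmt_7 (n : ℕ) (γ : ℝ) (hγ0 : 0 ≤ γ) (hγ1 : γ < 1)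
    (T : (Fin n → ℝ) → (Fin n → ℝ))
    (hcontr : ∀ q₁ q₂, ‖T q₁ - T q₂‖ ≤ γ * ‖q₁ - q₂‖)
    (qstar : Fin n → ℝ) (hfix : T qstar = qstar)
    (η : ℕ → ℝ) (hη : ∀ k, 0 ≤ η k ∧ η k ≤ 1)
    (hdiv : Filter.Tendsto (fun m => ∑ k ∈ Finset.range m, η k) Filter.atTop Filter.atTop)
    (q : ℕ → Fin n → ℝ)
    (hrec : ∀ k, q (k + 1) = q k + η k • (T (q k) - q k)) :
    Filter.Tendsto q Filter.atTop (nhds qstar) :=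
  stmt_7_general n γ hγ1 T hcontr qstar hfix η hη hdiv q hrec
end

section
/- Let T be a γ-contraction on ℝ^n with fixed point q*, 0 ≤ γ < 1, and let (η_k) satisfy 0 ≤ η_k ≤ 1 and ∑_k η_k = ∞. Let (u_k) be vectors with ‖u_k‖_∞ ≤ B. Define q_{k+1} = q_k + η_k (T q_k - q_k - u_k). Then limsup_{k→∞} ‖q_k - q*‖_∞ ≤ B / (1 - γ). -/
/-!
Writing `e k = ‖q k - q*‖`, the triangle inequality and the contraction property give
`e (k+1) ≤ (1 - a k) e k + a k C` with `a k = η k (1 - γ)` and `C = B / (1 - γ)`. The excess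
`max (e k - C) 0` then shrinks by the factor `1 - a k ≤ exp (-a k)` at each step, so it is at most
`exp (-∑ a)` times its initial value, and tends to `0` because `∑ a` diverges.
-/

open Filter Finset

theorem le_mul_exp_neg_sum_of_succ_le_one_sub_mul {f a : ℕ → ℝ} (hf : ∀ k, 0 ≤ f k)
    (hrec : ∀ k, f (k + 1) ≤ (1 - a k) * f k) (k : ℕ) :
    f k ≤ f 0 * Real.exp (-∑ j ∈ range k, a j) := by
  induction k with
  | zero => simp
  | succ k ih =>
    calc f (k + 1) ≤ (1 - a k) * f k := hrec k
      _ ≤ Real.exp (-a k) * (f 0 * Real.exp (-∑ j ∈ range k, a j)) := by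
          gcongr
          · exact hf k
          · linarith [Real.add_one_le_exp (-a k)]
      _ = f 0 * Real.exp (-∑ j ∈ range (k + 1), a j) := by
          rw [sum_range_succ, neg_add, Real.exp_add]
          ring

theorem tendsto_zero_of_succ_le_one_sub_mul {f a : ℕ → ℝ} (hf : ∀ k, 0 ≤ f k)
    (hrec : ∀ k, f (k + 1) ≤ (1 - a k) * f k)
    (ha : Tendsto (fun m => ∑ k ∈ range m, a k) atTop atTop) :
    Tendsto f atTop (nhds 0) := by
  refine squeeze_zero hf (le_mul_exp_neg_sum_of_succ_le_one_sub_mul hf hrec) ?_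
  simpa using (Real.tendsto_exp_neg_atTop_nhds_zero.comp ha).const_mul (f 0)

theorem limsup_le_of_succ_le_one_sub_mul_add_mul {e a : ℕ → ℝ} {C : ℝ} (he : ∀ k, 0 ≤ e k)
    (ha1 : ∀ k, a k ≤ 1)
    (hrec : ∀ k, e (k + 1) ≤ (1 - a k) * e k + a k * C)
    (ha : Tendsto (fun m => ∑ k ∈ range m, a k) atTop atTop) :
    limsup e atTop ≤ C := by
  set f : ℕ → ℝ := fun k => max (e k - C) 0
  have hfrec : ∀ k, f (k + 1) ≤ (1 - a k) * f k := by
    intro k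
    have h1a : 0 ≤ 1 - a k := sub_nonneg.mpr (ha1 k)
    refine max_le ?_ (mul_nonneg h1a (le_max_right _ _))
    calc e (k + 1) - C ≤ (1 - a k) * (e k - C) := by linarith [hrec k]
      _ ≤ (1 - a k) * f k := mul_le_mul_of_nonneg_left (le_max_left _ _) h1a
  have hCf : Tendsto (fun k => C + f k) atTop (nhds C) := by
    simpa using tendsto_const_nhds.add
      (tendsto_zero_of_succ_le_one_sub_mul (fun k => le_max_right _ _) hfrec ha)
  calc limsup e atTop ≤ limsup (fun k => C + f k) atTop :=
        limsup_le_limsup (Eventually.of_forall fun k => by linarith [le_max_left (e k - C) 0])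
          (isCoboundedUnder_le_of_le atTop he) hCf.isBoundedUnder_le
    _ = C := hCf.limsup_eq

theorem norm_relaxed_step_sub_le {E : Type*} [SeminormedAddCommGroup E] [NormedSpace ℝ E]
    {T : E → E} {γ η B : ℝ} {p x u : E} (hp : T p = p) (hT : ‖T x - T p‖ ≤ γ * ‖x - p‖)
    (hη0 : 0 ≤ η) (hη1 : η ≤ 1) (hu : ‖u‖ ≤ B) :
    ‖x + η • (T x - x - u) - p‖ ≤ (1 - η * (1 - γ)) * ‖x - p‖ + η * B := by
  have hsplit : x + η • (T x - x - u) - p = (1 - η) • (x - p) + η • (T x - T p) - η • u := by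
    rw [hp]; module
  calc ‖x + η • (T x - x - u) - p‖
      ≤ ‖(1 - η) • (x - p)‖ + ‖η • (T x - T p)‖ + ‖η • u‖ := by
        rw [hsplit]
        exact (norm_sub_le _ _).trans (add_le_add_left (norm_add_le _ _) _)
    _ ≤ (1 - η) * ‖x - p‖ + η * (γ * ‖x - p‖) + η * B := by
        rw [norm_smul_of_nonneg (sub_nonneg.mpr hη1), norm_smul_of_nonneg hη0,
          norm_smul_of_nonneg hη0]
        gcongr
    _ = (1 - η * (1 - γ)) * ‖x - p‖ + η * B := by ring

theorem stmt_8 (n : ℕ) (γ : ℝ) (hγ0 : 0 ≤ γ) (hγ1 : γ < 1)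
    (T : (Fin n → ℝ) → (Fin n → ℝ))
    (hcontr : ∀ q₁ q₂, ‖T q₁ - T q₂‖ ≤ γ * ‖q₁ - q₂‖)
    (qstar : Fin n → ℝ) (hfix : T qstar = qstar)
    (η : ℕ → ℝ) (hη : ∀ k, 0 ≤ η k ∧ η k ≤ 1)
    (hdiv : Filter.Tendsto (fun m => ∑ k ∈ Finset.range m, η k) Filter.atTop Filter.atTop)
    (u : ℕ → Fin n → ℝ) (B : ℝ) (hu : ∀ k, ‖u k‖ ≤ B)
    (q : ℕ → Fin n → ℝ)
    (hrec : ∀ k, q (k + 1) = q k + η k • (T (q k) - q k - u k)) :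
    Filter.limsup (fun k => ‖q k - qstar‖) Filter.atTop ≤ B / (1 - γ) := by
  have hγ : 0 < 1 - γ := sub_pos.mpr hγ1
  refine limsup_le_of_succ_le_one_sub_mul_add_mul (a := fun k => η k * (1 - γ))
    (fun k => norm_nonneg _) (fun k => by nlinarith [hη k]) (fun k => ?_) ?_
  · rw [mul_assoc, mul_div_cancel₀ B hγ.ne', hrec k]
    exact norm_relaxed_step_sub_le hfix (hcontr _ _) (hη k).1 (hη k).2 (hu k)
  · simpa only [← sum_mul] using hdiv.atTop_mul_const hγ
end
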